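/- arXiv:1003.5783 — 2 statements merged into one kernel-verified Lean document; each statement's English description precedes it below -/
import Mathlib

section
/- Let G be a connected s-regular finite loopless multigraph with an even number of vertices. Then r(G) ≠ 1. -/
/-! Suppose `G - e` has a proper `s`-edge-coloring. The endpoints of `e` have degree `s - 1`
in `G - e`, so some color `i` is missing at one of them, while every other vertex sees all `s`
colors. The edges of color `i` form a matching of a loopless graph of even order, so an even
number of vertices miss `i`; hence `i` is missing at both endpoints of `e`, and coloring `e`
with `i` gives a proper `s`-edge-coloring of `G`, i.e. `r(G) = 0`. -/

/-- A finite multigraph: finite vertex and edge types together with an incidence map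
assigning to each edge an unordered pair of vertices. -/
structure Mgraph where
  V : Type
  E : Type
  [finV : Finite V]
  [finE : Finite E]
  inc : E → Sym2 V

attribute [instance] Mgraph.finV Mgraph.finE

namespace Mgraph

/-- A multigraph is loopless if no edge joins a vertex to itself. -/
def Loopless (G : Mgraph) : Prop := ∀ e : G.E, ¬ (G.inc e).IsDiag

/-- The degree of a vertex: the number of edges incident with it. -/
noncomputable def degree (G : Mgraph) (v : G.V) : ℕ :=
  Nat.card {e : G.E // v ∈ G.inc e}

/-- The maximum degree Δ(G). -/
noncomputable def maxDegree (G : Mgraph) : ℕ :=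
  sSup (Set.range G.degree)

/-- `G` is `s`-regular. -/
def Regular (G : Mgraph) (s : ℕ) : Prop := ∀ v : G.V, G.degree v = s

/-- A proper edge coloring with `k` colors: adjacent (distinct, sharing an endpoint)
edges receive different colors. -/
def IsProperEdgeColoring (G : Mgraph) {k : ℕ} (c : G.E → Fin k) : Prop :=
  ∀ e f : G.E, e ≠ f → (∃ v : G.V, v ∈ G.inc e ∧ v ∈ G.inc f) → c e ≠ c f

/-- `G` admits a proper edge coloring with `k` colors. -/
def EdgeColorable (G : Mgraph) (k : ℕ) : Prop :=
  ∃ c : G.E → Fin k, G.IsProperEdgeColoring c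

/-- The chromatic index χ'(G). -/
noncomputable def chromaticIndex (G : Mgraph) : ℕ :=
  sInf {k : ℕ | G.EdgeColorable k}

/-- `G` is class 1, i.e. χ'(G) = Δ(G). -/
noncomputable def ClassOne (G : Mgraph) : Prop := G.chromaticIndex = G.maxDegree

/-- Delete a set of edges from `G`. -/
def deleteEdges (G : Mgraph) (S : Set G.E) : Mgraph where
  V := G.V
  E := {e : G.E // e ∉ S}
  inc e := G.inc e.1

/-- Delete a set of vertices from `G`, together with all incident edges. -/
def deleteVerts (G : Mgraph) (S : Set G.V) : Mgraph where
  V := {v : G.V // v ∉ S}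
  E := {e : G.E // ∀ v : G.V, v ∈ G.inc e → v ∉ S}
  inc e := (G.inc e.1).pmap (fun v hv => ⟨v, hv⟩) e.2

/-- The simple graph on `V(G)` whose adjacency is realized by the edges in `F`. -/
def factorGraph (G : Mgraph) (F : Set G.E) : SimpleGraph G.V where
  Adj u w := u ≠ w ∧ ∃ e ∈ F, G.inc e = s(u, w)
  symm := ⟨by
    rintro u w ⟨hne, e, heF, he⟩
    exact ⟨hne.symm, e, heF, by rw [he]; exact Sym2.eq_swap⟩⟩
  loopless := ⟨by rintro v ⟨hne, -⟩; exact hne rfl⟩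

/-- `G` is connected (in particular nonempty). -/
def Connected (G : Mgraph) : Prop := (G.factorGraph Set.univ).Connected

/-- `G` is 2-connected: it has at least 3 vertices and deleting any single vertex
leaves a connected graph. -/
def TwoConnected (G : Mgraph) : Prop :=
  3 ≤ Nat.card G.V ∧ ∀ v : G.V, (G.deleteVerts {v}).Connected

/-- The number of odd cycles in the spanning subgraph of `G` with edge set `F`:
the number of connected components of odd cardinality. -/
noncomputable def oddCycles (G : Mgraph) (F : Set G.E) : ℕ :=
  Nat.card {C : (G.factorGraph F).ConnectedComponent //
    Odd (Nat.card {v : G.V // (G.factorGraph F).connectedComponentMk v = C})}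

/-- `F` is a 1-factor (perfect matching): every vertex meets exactly one edge of `F`. -/
def IsOneFactor (G : Mgraph) (F : Set G.E) : Prop :=
  ∀ v : G.V, Nat.card {e : G.E // e ∈ F ∧ v ∈ G.inc e} = 1

/-- `F` is a 2-factor (spanning 2-regular subgraph): every vertex meets exactly two
edges of `F`. -/
def IsTwoFactor (G : Mgraph) (F : Set G.E) : Prop :=
  ∀ v : G.V, Nat.card {e : G.E // e ∈ F ∧ v ∈ G.inc e} = 2

/-- `f` encodes a decomposition of the edge set of `G` into `n` 2-factors
(the fibers of `some i`), together with, possibly, one 1-factor (the fiber of `none`,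
which is required to be empty when no 1-factor is used). -/
def IsDecomp (G : Mgraph) {n : ℕ} (f : G.E → Option (Fin n)) : Prop :=
  ((∀ e : G.E, f e ≠ none) ∨ G.IsOneFactor {e | f e = none}) ∧
    ∀ i : Fin n, G.IsTwoFactor {e | f e = some i}

/-- The total number of odd cycles of the 2-factors of a decomposition. -/
noncomputable def decompOdd (G : Mgraph) {n : ℕ} (f : G.E → Option (Fin n)) : ℕ :=
  ∑ i : Fin n, G.oddCycles {e | f e = some i}

/-- The oddness ξ(G): the minimum total number of odd cycles over all decompositions of
the edge set into 2-factors (together with one 1-factor when the degree is odd);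
`⊤` if no such decomposition exists. -/
noncomputable def oddness (G : Mgraph) : ℕ∞ :=
  sInf {k : ℕ∞ | ∃ (n : ℕ) (f : G.E → Option (Fin n)),
    G.IsDecomp f ∧ k = (G.decompOdd f : ℕ∞)}

/-- The minimum number of edges whose removal from `G` leaves a graph that is properly
edge colorable with `D` colors. -/
noncomputable def resistanceTo (G : Mgraph) (D : ℕ) : ℕ :=
  sInf {k : ℕ | ∃ S : Set G.E, Nat.card S = k ∧ (G.deleteEdges S).EdgeColorable D}

/-- The resistance r(G): the minimum number of edges whose removal from `G` leaves a
Δ(G)-edge-colorable graph. -/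
noncomputable def resistance (G : Mgraph) : ℕ := G.resistanceTo G.maxDegree

/-- The vertex resistance r_v(G): the minimum number of vertices whose removal from `G`
leaves a class 1 graph. -/
noncomputable def rv (G : Mgraph) : ℕ :=
  sInf {k : ℕ | ∃ S : Set G.V, Nat.card S = k ∧ (G.deleteVerts S).ClassOne}

/-- The vertex resistance r'_v(G): the minimum number of vertices whose removal from `G`
leaves a graph `H` with χ'(H) ≤ Δ(G). -/
noncomputable def rv' (G : Mgraph) : ℕ :=
  sInf {k : ℕ | ∃ S : Set G.V, Nat.card S = k ∧
    (G.deleteVerts S).chromaticIndex ≤ G.maxDegree}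

/-- The edge boundary ∂_G(X): the set of edges with one endpoint in `X` and one
endpoint outside `X`. -/
def edgeBoundary (G : Mgraph) (X : Set G.V) : Set G.E :=
  {e : G.E | ∃ u ∈ G.inc e, ∃ w ∈ G.inc e, u ∈ X ∧ w ∉ X}

/-- `G` is an `s`-graph: a loopless `s`-regular multigraph with `|∂_G(X)| ≥ s` for every
odd set `X` of vertices. -/
def IsSGraph (G : Mgraph) (s : ℕ) : Prop :=
  G.Loopless ∧ G.Regular s ∧
    ∀ X : Set G.V, Odd (Nat.card X) → s ≤ Nat.card (G.edgeBoundary X)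

end Mgraph

namespace Mgraph

variable {G H : Mgraph} {k s : ℕ}

lemma Regular.maxDegree_eq (hreg : G.Regular s) [Nonempty G.V] : G.maxDegree = s := by
  rw [maxDegree, show G.degree = fun _ => s from funext hreg, Set.range_const, csSup_singleton]

lemma Loopless.deleteEdges (hG : G.Loopless) (S : Set G.E) : (G.deleteEdges S).Loopless :=
  fun f => hG f.1

lemma EdgeColorable.deleteEdges (h : G.EdgeColorable k) (S : Set G.E) :
    (G.deleteEdges S).EdgeColorable k := by
  obtain ⟨c, hc⟩ := h
  exact ⟨fun f => c f.1, fun f g hfg hshare => hc f.1 g.1 (fun h => hfg (Subtype.ext h)) hshare⟩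

lemma resistanceTo_eq_zero_of_edgeColorable {D : ℕ} (h : G.EdgeColorable D) :
    G.resistanceTo D = 0 :=
  Nat.sInf_eq_zero.2 (Or.inl ⟨∅, by simp, h.deleteEdges ∅⟩)

lemma exists_edgeColorable_deleteEdges_singleton_of_resistanceTo_eq_one {D : ℕ}
    (h : G.resistanceTo D = 1) : ∃ e : G.E, (G.deleteEdges {e}).EdgeColorable D := by
  unfold resistanceTo at h
  obtain ⟨S, hS, hcol⟩ := h ▸ Nat.sInf_mem (Nat.nonempty_of_pos_sInf (h ▸ Nat.one_pos))
  obtain ⟨e, rfl⟩ := Set.ncard_eq_one.1 (Nat.card_coe_set_eq S ▸ hS)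
  exact ⟨e, hcol⟩

lemma degree_deleteEdges_singleton_of_notMem {e : G.E} {v : G.V} (hv : v ∉ G.inc e) :
    (G.deleteEdges {e}).degree v = G.degree v :=
  Nat.card_congr <| Equiv.subtypeSubtypeEquivSubtype (p := (· ∉ ({e} : Set G.E)))
    fun hf hfe => hv (Set.mem_singleton_iff.1 hfe ▸ hf)

lemma degree_deleteEdges_singleton_lt {e : G.E} {v : G.V} (hv : v ∈ G.inc e) :
    (G.deleteEdges {e}).degree v < G.degree v := by
  have hcard : (G.deleteEdges {e}).degree v =
      Nat.card {f : {f // v ∈ G.inc f} // f.1 ∉ ({e} : Set G.E)} :=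
    Nat.card_congr ⟨fun f => ⟨⟨f.1.1, f.2⟩, f.1.2⟩, fun f => ⟨⟨f.1.1, f.2⟩, f.1.2⟩,
      fun _ => rfl, fun _ => rfl⟩
  rw [hcard]
  exact Finite.card_subtype_lt (x := ⟨e, hv⟩) (by simp)

def MissesColor (H : Mgraph) (c : H.E → Fin k) (v : H.V) (i : Fin k) : Prop :=
  ∀ f : H.E, v ∈ H.inc f → c f ≠ i

lemma exists_missesColor_of_degree_lt (c : H.E → Fin k) {v : H.V}
    (hv : H.degree v < k) : ∃ i, H.MissesColor c v i := by
  by_contra! hall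
  have hsurj : Function.Surjective fun f : {f : H.E // v ∈ H.inc f} => c f := fun i => by
    obtain ⟨f, hf, hfi⟩ := not_forall₂.1 (hall i)
    exact ⟨⟨f, hf⟩, not_not.1 hfi⟩
  have := Nat.card_le_card_of_surjective _ hsurj
  rw [Nat.card_fin] at this
  exact absurd hv (not_lt.2 this)

namespace IsProperEdgeColoring

variable {c : H.E → Fin k}

lemma injective_restrict_edgesAt (hc : H.IsProperEdgeColoring c) (v : H.V) :
    Function.Injective fun f : {f : H.E // v ∈ H.inc f} => c f := by
  intro f g hfg
  by_contra hne
  exact hc f g (fun h => hne (Subtype.ext h)) ⟨v, f.2, g.2⟩ hfg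

lemma not_missesColor_of_degree_eq (hc : H.IsProperEdgeColoring c) {v : H.V}
    (hv : H.degree v = k) (i : Fin k) : ¬ H.MissesColor c v i := by
  obtain ⟨⟨f, hf⟩, rfl⟩ := ((hc.injective_restrict_edgesAt v).bijective_of_nat_card_le
    (by rw [Nat.card_fin]; exact hv.ge)).2 i
  exact fun hmiss => hmiss f hf rfl

lemma even_ncard_missesColor (hc : H.IsProperEdgeColoring c) (hH : H.Loopless)
    (heven : Even (Nat.card H.V)) (i : Fin k) : Even {v | H.MissesColor c v i}.ncard := by
  classical
  have : Fintype H.V := Fintype.ofFinite _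
  have : Fintype H.E := Fintype.ofFinite _
  have hcovered : {v | H.MissesColor c v i}ᶜ =
      ↑((Finset.univ.filter fun f => c f = i).biUnion fun f => (H.inc f).toFinset) := by
    ext v
    simp [MissesColor, and_comm]
  have hdisj : Set.PairwiseDisjoint ↑(Finset.univ.filter fun f => c f = i)
      fun f => (H.inc f).toFinset := by
    intro f hf g hg hfg
    simp only [Finset.coe_filter, Finset.mem_univ, true_and, Set.mem_ofPred_eq] at hf hg
    refine Finset.disjoint_left.2 fun v hvf hvg => ?_
    exact hc f g hfg ⟨v, Sym2.mem_toFinset.1 hvf, Sym2.mem_toFinset.1 hvg⟩ (hf.trans hg.symm)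
  have hcard := Set.ncard_add_ncard_compl {v | H.MissesColor c v i}
  rw [hcovered, Set.ncard_coe_finset, Finset.card_biUnion hdisj,
    Finset.sum_congr rfl fun f _ => Sym2.card_toFinset_of_not_isDiag _ (hH f),
    Finset.sum_const, smul_eq_mul] at hcard
  rw [← hcard] at heven
  exact (Nat.even_add.1 heven).2 (even_two.mul_left _)

lemma exists_ne_missesColor (hc : H.IsProperEdgeColoring c) (hH : H.Loopless)
    (heven : Even (Nat.card H.V)) {u : H.V} {i : Fin k} (hu : H.MissesColor c u i) :
    ∃ v ≠ u, H.MissesColor c v i := by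
  by_contra! hothers
  have hsingleton : {v | H.MissesColor c v i} = {u} :=
    Set.eq_singleton_iff_unique_mem.2 ⟨hu, fun v hv => by_contra fun hvu => hothers v hvu hv⟩
  have hparity := hc.even_ncard_missesColor hH heven i
  rw [hsingleton, Set.ncard_singleton] at hparity
  exact Nat.not_even_one hparity

end IsProperEdgeColoring

lemma edgeColorable_of_missesColor_endpoints {e : G.E} {c : (G.deleteEdges {e}).E → Fin k}
    (hc : (G.deleteEdges {e}).IsProperEdgeColoring c) {i : Fin k}
    (hmiss : ∀ v ∈ G.inc e, (G.deleteEdges {e}).MissesColor c v i) : G.EdgeColorable k := by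
  classical
  refine ⟨fun f => if hf : f = e then i else c ⟨f, hf⟩, fun f g hfg ⟨v, hvf, hvg⟩ => ?_⟩
  by_cases hf : f = e <;> by_cases hg : g = e
  · exact absurd (hf.trans hg.symm) hfg
  · subst hf
    simpa only [dif_pos, dif_neg hg] using (hmiss v hvf ⟨g, hg⟩ hvg).symm
  · subst hg
    simpa only [dif_pos, dif_neg hf] using hmiss v hvg ⟨f, hf⟩ hvf
  · simpa only [dif_neg hf, dif_neg hg] using
      hc ⟨f, hf⟩ ⟨g, hg⟩ (fun h => hfg (congrArg Subtype.val h)) ⟨v, hvf, hvg⟩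

theorem Regular.edgeColorable_of_edgeColorable_deleteEdges_singleton (hreg : G.Regular s)
    (hG : G.Loopless) (heven : Even (Nat.card G.V)) {e : G.E}
    (h : (G.deleteEdges {e}).EdgeColorable s) : G.EdgeColorable s := by
  obtain ⟨c, hc⟩ := h
  obtain ⟨u, hue⟩ : ∃ u, u ∈ G.inc e := ⟨_, Sym2.out_fst_mem _⟩
  obtain ⟨i, hu⟩ :=
    exists_missesColor_of_degree_lt c (hreg u ▸ degree_deleteEdges_singleton_lt hue)
  obtain ⟨w, hwu, hw⟩ := hc.exists_ne_missesColor (hG.deleteEdges _) heven hu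
  have hwe : w ∈ G.inc e := by
    by_contra hwe
    exact hc.not_missesColor_of_degree_eq
      ((degree_deleteEdges_singleton_of_notMem hwe).trans (hreg w)) i hw
  refine edgeColorable_of_missesColor_endpoints hc (i := i) fun v hv => ?_
  rw [(Sym2.mem_and_mem_iff hwu.symm).1 ⟨hue, hwe⟩] at hv
  rcases Sym2.mem_iff.1 hv with rfl | rfl
  exacts [hu, hw]

end Mgraph

open Mgraph in
theorem resistance_ne_one_of_even_order_general (G : Mgraph) (hG : G.Loopless) (s : ℕ)
    (hreg : G.Regular s) (heven : Even (Nat.card G.V)) :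
    G.resistance ≠ 1 := by
  intro hr
  obtain ⟨e, he⟩ := exists_edgeColorable_deleteEdges_singleton_of_resistanceTo_eq_one hr
  have : Nonempty G.V := ⟨(G.inc e).out.1⟩
  rw [hreg.maxDegree_eq] at he
  have hcol := hreg.edgeColorable_of_edgeColorable_deleteEdges_singleton hG heven he
  have hzero : G.resistance = 0 :=
    resistanceTo_eq_zero_of_edgeColorable (hreg.maxDegree_eq ▸ hcol)
  omega

open Mgraph in
/-- A connected `s`-regular finite loopless multigraph of even order has `r(G) ≠ 1`. -/
theorem resistance_ne_one_of_even_order (G : Mgraph) (hG : G.Loopless) (s : ℕ)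
    (hreg : G.Regular s) (hconn : G.Connected) (heven : Even (Nat.card G.V)) :
    G.resistance ≠ 1 :=
  resistance_ne_one_of_even_order_general G hG s hreg heven
end

section
/- For every finite loopless multigraph G, r(G) ≤ r_v(G)·⌊Δ(G)/2⌋ and r(G) ≤ r'_v(G)·⌊Δ(G)/2⌋. -/
/-!
Let `G - S` be `Δ`-edge-colourable. Its colouring is a partial colouring of `G` whose
uncoloured edges all meet `S`. At each vertex `v` we colour uncoloured edges `vu` one at a time,
directly or after one Kempe change, and no step uncolours an edge. This continues until at most
`⌊Δ/2⌋` remain at `v`. If we are stuck with more, then for every colour `γ` missing at `u` and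
`β` missing at `v` the `γ`/`β` Kempe chain is a path with ends `u` and `v`. So the colours
missing at distinct ends `u` are disjoint, and all of them are present at `v`. Counting then
gives `2 · #(uncoloured edges at v) ≤ Δ`, hence at most `|S| · ⌊Δ/2⌋` uncoloured edges in all.
Finally `r'_v ≤ r_v`.
-/

namespace SimpleGraph

variable {V : Type*} {H : SimpleGraph V}

lemma Walk.IsPath.neighborSet_nontrivial {x y v : V} {p : H.Walk x y} (hp : p.IsPath)
    (hv : v ∈ p.support) (hvx : v ≠ x) (hvy : v ≠ y) : (H.neighborSet v).Nontrivial := by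
  obtain ⟨n, rfl, hn⟩ := Walk.mem_support_iff_exists_getVert.mp hv
  have hn0 : n ≠ 0 := by rintro rfl; simp at hvx
  have hnl : n < p.length := hn.lt_of_ne (by rintro rfl; simp at hvy)
  have hprev := p.adj_getVert_succ (i := n - 1) (by omega)
  rw [Nat.sub_add_cancel (Nat.one_le_iff_ne_zero.2 hn0)] at hprev
  refine ⟨_, hprev.symm, _, p.adj_getVert_succ hnl, fun h => ?_⟩
  have := hp.getVert_injOn (by simp; omega) (by simp; omega) h
  omega

/-- The paths are known to avoid `s`. Once `a` has at most one neighbour outside `s`, both paths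
take the same first step, and maximum degree two forces all later steps to agree. -/
lemma Walk.IsPath.support_subset_or_support_subset
    (hdeg : ∀ w z, H.Adj w z → (H.neighborSet w \ {z}).Subsingleton) :
    ∀ {a x y : V} {p : H.Walk a x} {q : H.Walk a y} {s : Set V}, p.IsPath → q.IsPath →
      (H.neighborSet a \ s).Subsingleton → (∀ z ∈ s, z ∉ p.support ∧ z ∉ q.support) →
      p.support ⊆ q.support ∨ q.support ⊆ p.support := by
  intro a x y p
  induction p with
  | nil => exact fun _ _ _ _ => .inl (by simp)
  | @cons a b x hab p ih =>
    intro q s hp hq ha hs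
    cases q with
    | nil => exact .inr (by simp)
    | @cons _ c _ hac q =>
      have hb : b ∉ s := fun hb => (hs b hb).1 (by simp)
      have hc : c ∉ s := fun hc => (hs c hc).2 (by simp)
      obtain rfl : b = c := ha ⟨hab, hb⟩ ⟨hac, hc⟩
      rw [Walk.cons_isPath_iff] at hp hq
      simp only [Walk.support_cons]
      exact (ih hp.1 hq.1 (hdeg b a hab.symm) (by simpa using ⟨hp.2, hq.2⟩)).imp
        (List.cons_subset_cons a) (List.cons_subset_cons a)

lemma eq_or_eq_or_eq_of_reachable
    (hdeg : ∀ w z, H.Adj w z → (H.neighborSet w \ {z}).Subsingleton)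
    {u u' v : V} (hu : (H.neighborSet u).Subsingleton) (hu' : (H.neighborSet u').Subsingleton)
    (hv : (H.neighborSet v).Subsingleton) (huv : H.Reachable u v) (hu'v : H.Reachable u' v) :
    u = u' ∨ u = v ∨ u' = v := by
  by_contra! h
  obtain ⟨p, hp⟩ := huv.exists_isPath
  obtain ⟨q, hq⟩ := (huv.trans hu'v.symm).exists_isPath
  rcases hp.support_subset_or_support_subset hdeg hq (s := ∅) (by simpa using hu) (by simp)
    with hpq | hqp
  · exact (hq.neighborSet_nontrivial (hpq p.end_mem_support) h.2.1.symm h.2.2.symm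
      ).not_subsingleton hv
  · exact (hp.neighborSet_nontrivial (hqp q.end_mem_support) h.1.symm h.2.2).not_subsingleton hu'

end SimpleGraph

namespace Mgraph

variable {G : Mgraph} {D : ℕ}

def IsPartialColoring (G : Mgraph) (c : G.E → Option (Fin D)) : Prop :=
  ∀ ⦃e f : G.E⦄ ⦃γ : Fin D⦄, e ≠ f → (∃ w, w ∈ G.inc e ∧ w ∈ G.inc f) →
    c e = some γ → c f ≠ some γ

def colorsAt (G : Mgraph) (c : G.E → Option (Fin D)) (w : G.V) : Set (Fin D) :=
  {γ | ∃ e, w ∈ G.inc e ∧ c e = some γ}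

def uncoloredAt (G : Mgraph) (c : G.E → Option (Fin D)) (w : G.V) : Set G.E :=
  {e | c e = none ∧ w ∈ G.inc e}

lemma uncoloredAt_mono {c c' : G.E → Option (Fin D)} (h : {e | c' e = none} ⊆ {e | c e = none})
    (w : G.V) : G.uncoloredAt c' w ⊆ G.uncoloredAt c w :=
  fun _ he => ⟨h he.1, he.2⟩

lemma ncard_colorsAt_add_ncard_uncoloredAt_le (c : G.E → Option (Fin D)) (w : G.V) :
    (G.colorsAt c w).ncard + (G.uncoloredAt c w).ncard ≤ G.degree w := by
  set colored := {e | w ∈ G.inc e ∧ c e ≠ none}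
  have hcolors : (G.colorsAt c w).ncard ≤ colored.ncard := calc
    (G.colorsAt c w).ncard = (some '' G.colorsAt c w).ncard :=
      (Set.ncard_image_of_injective _ (Option.some_injective _)).symm
    _ ≤ (c '' colored).ncard := Set.ncard_le_ncard (by
      rintro _ ⟨γ, ⟨e, hwe, hce⟩, rfl⟩
      exact ⟨e, ⟨hwe, by simp [hce]⟩, hce⟩)
    _ ≤ colored.ncard := Set.ncard_image_le
  have hsplit : colored ∪ G.uncoloredAt c w = {e | w ∈ G.inc e} := by
    ext e
    simp only [colored, uncoloredAt, Set.mem_union, Set.mem_ofPred_eq]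
    tauto
  have hdisj : Disjoint colored (G.uncoloredAt c w) :=
    Set.disjoint_left.2 fun _ he he' => he.2 he'.1
  have hdeg : G.degree w = {e | w ∈ G.inc e}.ncard := Nat.card_coe_set_eq _
  rw [hdeg, ← hsplit, Set.ncard_union_eq hdisj]
  omega

variable {c : G.E → Option (Fin D)}

lemma exists_notMem_colorsAt_injOn [Nonempty (Fin D)] {w : G.V}
    (hdeg : G.degree w ≤ D) {T : Set G.E} (hT : T ⊆ G.uncoloredAt c w) :
    ∃ f : G.E → Fin D, Set.MapsTo f T (G.colorsAt c w)ᶜ ∧ Set.InjOn f T := by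
  have hcount := (ncard_colorsAt_add_ncard_uncoloredAt_le c w).trans hdeg
  have hT : T.ncard ≤ (G.colorsAt c w)ᶜ.ncard := by
    rw [Set.ncard_compl, Nat.card_fin]
    have := Set.ncard_le_ncard hT
    omega
  refine (Set.toFinite T).exists_injOn_of_encard_le (t := (G.colorsAt c w)ᶜ) ?_
  rwa [← (Set.toFinite T).cast_ncard_eq, ← (Set.toFinite _).cast_ncard_eq, Nat.cast_le]

lemma exists_ssubset_of_notMem_colorsAt (hc : G.IsPartialColoring c) {e : G.E} {γ : Fin D}
    (he : c e = none) (hγ : ∀ w ∈ G.inc e, γ ∉ G.colorsAt c w) :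
    ∃ c' : G.E → Option (Fin D), G.IsPartialColoring c' ∧
      {f | c' f = none} ⊂ {f | c f = none} := by
  classical
  refine ⟨Function.update c e (some γ), ?_, ?_⟩
  · have hfree : ∀ f, f ≠ e → (∃ w, w ∈ G.inc e ∧ w ∈ G.inc f) → c f ≠ some γ :=
      fun f _ ⟨w, hwe, hwf⟩ hcf => hγ w hwe ⟨f, hwf, hcf⟩
    intro f₁ f₂ δ hne hshare h₁ h₂
    rcases eq_or_ne f₁ e with hf₁ | hf₁ <;> rcases eq_or_ne f₂ e with hf₂ | hf₂
    · exact hne (hf₁.trans hf₂.symm)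
    · rw [hf₁, Function.update_self, Option.some_inj] at h₁
      rw [Function.update_of_ne hf₂, ← h₁] at h₂
      exact hfree f₂ hf₂ (hf₁ ▸ hshare) h₂
    · rw [hf₂, Function.update_self, Option.some_inj] at h₂
      rw [Function.update_of_ne hf₁, ← h₂] at h₁
      exact hfree f₁ hf₁ (by simpa only [hf₂, and_comm] using hshare) h₁
    · rw [Function.update_of_ne hf₁] at h₁
      rw [Function.update_of_ne hf₂] at h₂
      exact hc hne hshare h₁ h₂
  · have hsub : {f | Function.update c e (some γ) f = none} ⊆ {f | c f = none} := by
      intro f hf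
      rcases eq_or_ne f e with rfl | hfe
      · exact he
      · simpa [Function.update_of_ne hfe] using hf
    exact (Set.ssubset_iff_of_subset hsub).2 ⟨e, he, by simp⟩

def kempeGraph (G : Mgraph) (c : G.E → Option (Fin D)) (α β : Fin D) : SimpleGraph G.V :=
  G.factorGraph {e | c e = some α ∨ c e = some β}

lemma kempeGraph_comm (α β : Fin D) : G.kempeGraph c α β = G.kempeGraph c β α := by
  simp only [kempeGraph, or_comm]

lemma IsPartialColoring.eq_of_inc_eq (hc : G.IsPartialColoring c) {e f : G.E} {w a b : G.V}
    {δ : Fin D} (he : G.inc e = s(w, a)) (hf : G.inc f = s(w, b)) (hce : c e = some δ)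
    (hcf : c f = some δ) : a = b := by
  obtain rfl : e = f := by
    by_contra hne
    exact hc hne ⟨w, by simp [he], by simp [hf]⟩ hce hcf
  exact Sym2.congr_right.1 (he.symm.trans hf)

lemma IsPartialColoring.neighborSet_kempeGraph_subsingleton (hc : G.IsPartialColoring c)
    {α β : Fin D} {x : G.V} (hx : α ∉ G.colorsAt c x) :
    ((G.kempeGraph c α β).neighborSet x).Subsingleton := by
  have hβ : ∀ {f y}, G.inc f = s(x, y) → (c f = some α ∨ c f = some β) → c f = some β :=
    fun hf hcf => hcf.resolve_left fun h => hx ⟨_, by simp [hf], h⟩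
  rintro a ⟨-, f, hf, hfa⟩ b ⟨-, g, hg, hgb⟩
  exact hc.eq_of_inc_eq hfa hgb (hβ hfa hf) (hβ hgb hg)

/-- Pigeonhole: two of any three edges coloured `α` or `β` share a colour. -/
lemma IsPartialColoring.neighborSet_kempeGraph_diff_subsingleton (hc : G.IsPartialColoring c)
    (α β : Fin D) {w z : G.V} (hwz : (G.kempeGraph c α β).Adj w z) :
    ((G.kempeGraph c α β).neighborSet w \ {z}).Subsingleton := by
  obtain ⟨-, k, hk, hkz⟩ := hwz
  rintro a ⟨⟨-, f, hf, hfa⟩, haz⟩ b ⟨⟨-, g, hg, hgb⟩, hbz⟩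
  rw [Set.mem_singleton_iff] at haz hbz
  rcases hf with hf | hf <;> rcases hg with hg | hg <;> rcases hk with hk | hk <;>
    first
    | exact hc.eq_of_inc_eq hfa hgb hf hg
    | exact absurd (hc.eq_of_inc_eq hfa hkz hf hk) haz
    | exact absurd (hc.eq_of_inc_eq hgb hkz hg hk) hbz

lemma reachable_of_mem_inc {α β : Fin D} {u w w' : G.V} {e : G.E}
    (he : c e = some α ∨ c e = some β) (hw : w ∈ G.inc e) (hw' : w' ∈ G.inc e)
    (hu : (G.kempeGraph c α β).Reachable u w) : (G.kempeGraph c α β).Reachable u w' := by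
  rcases eq_or_ne w w' with rfl | hne
  · exact hu
  · exact hu.trans <| SimpleGraph.Adj.reachable
      ⟨hne, e, he, (Sym2.mem_and_mem_iff hne).1 ⟨hw, hw'⟩⟩

open Classical in
/-- The Kempe change at the component of `u`; `Equiv.swap α β` fixes every other colour, so only
the `α`/`β` edges of the component change. -/
noncomputable def kempeSwap (G : Mgraph) (c : G.E → Option (Fin D)) (α β : Fin D) (u : G.V) :
    G.E → Option (Fin D) := fun e =>
  if ∃ w ∈ G.inc e, (G.kempeGraph c α β).Reachable u w then (c e).map (Equiv.swap α β)
  else c e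

section

variable {α β : Fin D} {u : G.V}

lemma kempeSwap_eq_none_iff (e : G.E) : G.kempeSwap c α β u e = none ↔ c e = none := by
  unfold kempeSwap
  split_ifs <;> simp

lemma kempeSwap_of_reachable {e : G.E} {w : G.V} (hw : w ∈ G.inc e)
    (hu : (G.kempeGraph c α β).Reachable u w) :
    G.kempeSwap c α β u e = (c e).map (Equiv.swap α β) :=
  if_pos ⟨w, hw, hu⟩

/-- An `α`/`β` edge meeting the component of `u` lies inside it. -/
lemma kempeSwap_of_not_reachable {e : G.E} {x : G.V} (hx : x ∈ G.inc e)
    (hu : ¬ (G.kempeGraph c α β).Reachable u x) : G.kempeSwap c α β u e = c e := by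
  unfold kempeSwap
  split_ifs with h
  · obtain ⟨w, hw, huw⟩ := h
    have hα : c e ≠ some α := fun h => hu (reachable_of_mem_inc (.inl h) hw hx huw)
    have hβ : c e ≠ some β := fun h => hu (reachable_of_mem_inc (.inr h) hw hx huw)
    cases hce : c e with
    | none => rfl
    | some γ =>
      rw [hce, ne_eq, Option.some_inj] at hα hβ
      simp [Equiv.swap_apply_of_ne_of_ne hα hβ]
  · rfl

lemma IsPartialColoring.kempeSwap (hc : G.IsPartialColoring c) (α β : Fin D) (u : G.V) :
    G.IsPartialColoring (G.kempeSwap c α β u) := by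
  intro e f γ hne ⟨w, hwe, hwf⟩ hce hcf
  by_cases hw : (G.kempeGraph c α β).Reachable u w
  · rw [kempeSwap_of_reachable hwe hw, Option.map_eq_some_iff] at hce
    rw [kempeSwap_of_reachable hwf hw, Option.map_eq_some_iff] at hcf
    obtain ⟨δ, hce, rfl⟩ := hce
    obtain ⟨δ', hcf, hδ⟩ := hcf
    rw [(Equiv.swap α β).injective hδ] at hcf
    exact hc hne ⟨w, hwe, hwf⟩ hce hcf
  · rw [kempeSwap_of_not_reachable hwe hw] at hce
    rw [kempeSwap_of_not_reachable hwf hw] at hcf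
    exact hc hne ⟨w, hwe, hwf⟩ hce hcf

lemma notMem_colorsAt_kempeSwap (hα : α ∉ G.colorsAt c u) :
    β ∉ G.colorsAt (G.kempeSwap c α β u) u := by
  rintro ⟨e, hue, hce⟩
  rw [kempeSwap_of_reachable hue .rfl, Option.map_eq_some_iff] at hce
  obtain ⟨δ, hδ, hswap⟩ := hce
  rw [Equiv.swap_apply_eq_iff, Equiv.swap_apply_right] at hswap
  exact hα ⟨e, hue, hswap ▸ hδ⟩

lemma colorsAt_kempeSwap_of_not_reachable {x : G.V}
    (hx : ¬ (G.kempeGraph c α β).Reachable u x) :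
    G.colorsAt (G.kempeSwap c α β u) x = G.colorsAt c x := by
  ext γ
  refine exists_congr fun e => and_congr_right fun hxe => ?_
  rw [kempeSwap_of_not_reachable hxe hx]

lemma exists_ssubset_of_not_reachable (hc : G.IsPartialColoring c) {e : G.E} {v : G.V}
    (he : c e = none) (hu : u ∈ G.inc e) (hv : v ∈ G.inc e) (huv : u ≠ v)
    (hα : α ∉ G.colorsAt c u) (hβ : β ∉ G.colorsAt c v)
    (hr : ¬ (G.kempeGraph c α β).Reachable u v) :
    ∃ c' : G.E → Option (Fin D), G.IsPartialColoring c' ∧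
      {f | c' f = none} ⊂ {f | c f = none} := by
  have hinc : G.inc e = s(u, v) := (Sym2.mem_and_mem_iff huv).1 ⟨hu, hv⟩
  obtain ⟨c', hc', hlt⟩ := exists_ssubset_of_notMem_colorsAt (hc.kempeSwap α β u) (γ := β)
    ((kempeSwap_eq_none_iff e).2 he) (by
      intro w hw
      rw [hinc, Sym2.mem_iff] at hw
      rcases hw with rfl | rfl
      · exact notMem_colorsAt_kempeSwap hα
      · rwa [colorsAt_kempeSwap_of_not_reachable hr])
  exact ⟨c', hc', by simpa only [kempeSwap_eq_none_iff] using hlt⟩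

end

lemma IsPartialColoring.eq_of_reachable_kempeGraph (hc : G.IsPartialColoring c) {β γ : Fin D}
    {u u' v : G.V} (hβ : β ∉ G.colorsAt c v) (hu : γ ∉ G.colorsAt c u)
    (hu' : γ ∉ G.colorsAt c u') (huv : u ≠ v) (hu'v : u' ≠ v)
    (hr : (G.kempeGraph c γ β).Reachable u v) (hr' : (G.kempeGraph c γ β).Reachable u' v) :
    u = u' := by
  have hv : ((G.kempeGraph c γ β).neighborSet v).Subsingleton := by
    rw [kempeGraph_comm]
    exact hc.neighborSet_kempeGraph_subsingleton hβ
  refine (SimpleGraph.eq_or_eq_or_eq_of_reachable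
    (fun _ _ => hc.neighborSet_kempeGraph_diff_subsingleton γ β)
    (hc.neighborSet_kempeGraph_subsingleton hu) (hc.neighborSet_kempeGraph_subsingleton hu')
    hv hr hr').resolve_right ?_
  rintro (h | h) <;> contradiction

/-- Each end `u` misses at least as many colours as it has uncoloured edges to `v`, and the colours
missing at distinct ends are distinct colours present at `v`. -/
lemma two_mul_ncard_uncoloredAt_le (hG : G.Loopless) (hdeg : ∀ w, G.degree w ≤ D)
    (hc : G.IsPartialColoring c) {v : G.V}
    (hcommon : ∀ e ∈ G.uncoloredAt c v, ∀ u ∈ G.inc e, u ≠ v →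
      (G.colorsAt c v)ᶜ ⊆ G.colorsAt c u)
    (hreach : ∀ e ∈ G.uncoloredAt c v, ∀ u ∈ G.inc e, u ≠ v → ∀ α ∉ G.colorsAt c u,
      ∀ β ∉ G.colorsAt c v, (G.kempeGraph c α β).Reachable u v) :
    2 * (G.uncoloredAt c v).ncard ≤ D := by
  classical
  set U := G.uncoloredAt c v
  have hv : (G.colorsAt c v).ncard + U.ncard ≤ D :=
    (ncard_colorsAt_add_ncard_uncoloredAt_le c v).trans (hdeg v)
  suffices U.ncard ≤ (G.colorsAt c v).ncard by omega
  rcases U.eq_empty_or_nonempty with hU | hU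
  · simp [hU]
  have hfree : (G.colorsAt c v).ncard < (Set.univ : Set (Fin D)).ncard := by
    rw [Set.ncard_univ, Nat.card_fin]
    have := (Set.ncard_pos (Set.toFinite U)).2 hU
    omega
  obtain ⟨β, -, hβ⟩ := Set.exists_mem_notMem_of_ncard_lt_ncard hfree
  have : Nonempty (Fin D) := ⟨β⟩
  have hother : ∀ e, ∃ u, e ∈ U → u ∈ G.inc e ∧ u ≠ v := fun e =>
    if h : e ∈ U then ⟨_, fun _ => ⟨Sym2.other_mem h.2, Sym2.other_ne (hG e) h.2⟩⟩
    else ⟨v, fun h' => absurd h' h⟩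
  choose other hother using hother
  choose F hFmaps hFinj using fun w =>
    exists_notMem_colorsAt_injOn (c := c) (hdeg w) (T := {e ∈ U | other e = w})
      fun e he => he.2 ▸ ⟨he.1.1, (hother e he.1).1⟩
  have hmiss : ∀ e ∈ U, F (other e) e ∉ G.colorsAt c (other e) :=
    fun e he => hFmaps (other e) ⟨he, rfl⟩
  refine Set.ncard_le_ncard_of_injOn (fun e => F (other e) e) ?_ ?_
  · intro e he
    by_contra h
    exact hmiss e he (hcommon e he _ (hother e he).1 (hother e he).2 h)
  · intro e he e' he' (h : F (other e) e = F (other e') e')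
    have hw : other e = other e' := by
      refine hc.eq_of_reachable_kempeGraph hβ (hmiss e he) (h ▸ hmiss e' he')
        (hother e he).2 (hother e' he').2 ?_ ?_
      · exact hreach e he _ (hother e he).1 (hother e he).2 _ (hmiss e he) β hβ
      · exact hreach e' he' _ (hother e' he').1 (hother e' he').2 _ (h ▸ hmiss e' he') β hβ
    exact hFinj (other e) ⟨he, rfl⟩ ⟨he', hw.symm⟩ (by simpa only [hw] using h)

lemma exists_ssubset_of_half_lt_ncard_uncoloredAt (hG : G.Loopless) (hdeg : ∀ w, G.degree w ≤ D)
    (hc : G.IsPartialColoring c) {v : G.V} (hv : D / 2 < (G.uncoloredAt c v).ncard) :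
    ∃ c' : G.E → Option (Fin D), G.IsPartialColoring c' ∧
      {e | c' e = none} ⊂ {e | c e = none} := by
  by_contra! hstuck
  have := two_mul_ncard_uncoloredAt_le hG hdeg hc (v := v) ?_ ?_
  · omega
  · intro e he u hu huv γ hγv
    by_contra hγu
    obtain ⟨c', hc', hlt⟩ := exists_ssubset_of_notMem_colorsAt hc he.1 (γ := γ) (by
      intro w hw
      rw [(Sym2.mem_and_mem_iff huv).1 ⟨hu, he.2⟩, Sym2.mem_iff] at hw
      rcases hw with rfl | rfl
      · exact hγu
      · exact hγv)
    exact hstuck c' hc' hlt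
  · intro e he u hu huv α hα β hβ
    by_contra hr
    obtain ⟨c', hc', hlt⟩ := exists_ssubset_of_not_reachable hc he.1 hu he.2 huv hα hβ hr
    exact hstuck c' hc' hlt

lemma exists_ncard_uncoloredAt_le (hG : G.Loopless) (hdeg : ∀ w, G.degree w ≤ D)
    (hc : G.IsPartialColoring c) (v : G.V) :
    ∃ c' : G.E → Option (Fin D), G.IsPartialColoring c' ∧
      {e | c' e = none} ⊆ {e | c e = none} ∧ (G.uncoloredAt c' v).ncard ≤ D / 2 := by
  induction hn : {e | c e = none}.ncard using Nat.strong_induction_on generalizing c with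
  | _ n ih =>
  by_cases hle : (G.uncoloredAt c v).ncard ≤ D / 2
  · exact ⟨c, hc, subset_rfl, hle⟩
  obtain ⟨c₁, hc₁, hlt⟩ :=
    exists_ssubset_of_half_lt_ncard_uncoloredAt hG hdeg hc (not_le.1 hle)
  obtain ⟨c', hc', hsub, hv⟩ := ih _ (hn ▸ Set.ncard_lt_ncard hlt) hc₁ rfl
  exact ⟨c', hc', hsub.trans hlt.subset, hv⟩

lemma exists_forall_ncard_uncoloredAt_le (hG : G.Loopless) (hdeg : ∀ w, G.degree w ≤ D)
    (hc : G.IsPartialColoring c) :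
    ∃ c' : G.E → Option (Fin D), G.IsPartialColoring c' ∧
      {e | c' e = none} ⊆ {e | c e = none} ∧ ∀ v, (G.uncoloredAt c' v).ncard ≤ D / 2 := by
  suffices ∀ s : Set G.V, s.Finite → ∃ c' : G.E → Option (Fin D), G.IsPartialColoring c' ∧
      {e | c' e = none} ⊆ {e | c e = none} ∧ ∀ v ∈ s, (G.uncoloredAt c' v).ncard ≤ D / 2 by
    simpa using this Set.univ Set.finite_univ
  intro s hs
  induction s, hs using Set.Finite.induction_on with
  | empty => exact ⟨c, hc, subset_rfl, by simp⟩
  | @insert v s _ _ ih =>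
    obtain ⟨c₁, hc₁, hsub₁, hs₁⟩ := ih
    obtain ⟨c₂, hc₂, hsub₂, hv₂⟩ := exists_ncard_uncoloredAt_le hG hdeg hc₁ v
    refine ⟨c₂, hc₂, hsub₂.trans hsub₁, ?_⟩
    rintro w (rfl | hw)
    · exact hv₂
    · exact (Set.ncard_le_ncard (uncoloredAt_mono hsub₂ w)).trans (hs₁ w hw)

lemma ncard_uncolored_le {S : Set G.V} {k : ℕ}
    (hS : ∀ e, c e = none → ∃ w ∈ G.inc e, w ∈ S)
    (hk : ∀ w, (G.uncoloredAt c w).ncard ≤ k) : {e | c e = none}.ncard ≤ S.ncard * k := calc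
  {e | c e = none}.ncard ≤ (⋃ w ∈ S.toFinite.toFinset, G.uncoloredAt c w).ncard :=
      Set.ncard_le_ncard fun e he => by
        obtain ⟨w, hwe, hwS⟩ := hS e he
        exact Set.mem_biUnion (S.toFinite.mem_toFinset.2 hwS) ⟨he, hwe⟩
  _ ≤ ∑ w ∈ S.toFinite.toFinset, (G.uncoloredAt c w).ncard := Finset.set_ncard_biUnion_le _ _
  _ ≤ S.toFinite.toFinset.card * k := Finset.sum_le_card_nsmul _ _ _ fun w _ => hk w
  _ = S.ncard * k := by rw [Set.ncard_eq_toFinset_card S]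

lemma mem_inc_deleteVerts_iff {S : Set G.V} {e : (G.deleteVerts S).E} {x : (G.deleteVerts S).V} :
    x ∈ (G.deleteVerts S).inc e ↔ x.1 ∈ G.inc e.1 :=
  (Sym2.mem_pmap_iff (fun v hv => (⟨v, hv⟩ : {v // v ∉ S})) (G.inc e.1) e.2 x).trans
    ⟨fun ⟨_, ha, hx⟩ => hx ▸ ha, fun hx => ⟨x.1, hx, rfl⟩⟩

lemma exists_isPartialColoring_of_edgeColorable_deleteVerts {S : Set G.V}
    (h : (G.deleteVerts S).EdgeColorable D) :
    ∃ c : G.E → Option (Fin D), G.IsPartialColoring c ∧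
      ∀ e, c e = none → ∃ w ∈ G.inc e, w ∈ S := by
  classical
  obtain ⟨c₀, hc₀⟩ := h
  refine ⟨fun e => if he : ∀ w ∈ G.inc e, w ∉ S then some (c₀ ⟨e, he⟩) else none,
    ?_, ?_⟩
  · intro e f γ hne ⟨w, hwe, hwf⟩ hce hcf
    dsimp only at hce hcf
    split_ifs at hce hcf with he hf
    rw [Option.some_inj] at hce hcf
    refine hc₀ ⟨e, he⟩ ⟨f, hf⟩ (fun h => hne (congrArg Subtype.val h))
      ⟨⟨w, he w hwe⟩, mem_inc_deleteVerts_iff.2 hwe, mem_inc_deleteVerts_iff.2 hwf⟩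
      (hce.trans hcf.symm)
  · intro e he
    by_contra! h
    simp [dif_pos h] at he

lemma edgeColorable_deleteEdges_uncolored (hc : G.IsPartialColoring c) :
    (G.deleteEdges {e | c e = none}).EdgeColorable D := by
  refine ⟨fun e => (c e.1).get (Option.ne_none_iff_isSome.1 e.2), ?_⟩
  intro e f hne hshare heq
  exact hc (fun h => hne (Subtype.ext h)) hshare (Option.some_get _).symm
    (by rw [← Option.some_get (Option.ne_none_iff_isSome.1 f.2)]; exact congrArg some heq.symm)

lemma resistanceTo_le_ncard_mul_of_edgeColorable_deleteVerts (hG : G.Loopless)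
    (hdeg : ∀ w, G.degree w ≤ D) {S : Set G.V} (h : (G.deleteVerts S).EdgeColorable D) :
    G.resistanceTo D ≤ S.ncard * (D / 2) := by
  obtain ⟨c, hc, hS⟩ := exists_isPartialColoring_of_edgeColorable_deleteVerts h
  obtain ⟨c', hc', hsub, hhalf⟩ := exists_forall_ncard_uncoloredAt_le hG hdeg hc
  calc G.resistanceTo D ≤ Nat.card {e | c' e = none} :=
        Nat.sInf_le ⟨_, rfl, edgeColorable_deleteEdges_uncolored hc'⟩
    _ ≤ S.ncard * (D / 2) := ncard_uncolored_le (fun e he => hS e (hsub he)) hhalf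

lemma degree_le_maxDegree (w : G.V) : G.degree w ≤ G.maxDegree :=
  le_csSup (Set.finite_range _).bddAbove ⟨w, rfl⟩

lemma maxDegree_deleteVerts_le (S : Set G.V) : (G.deleteVerts S).maxDegree ≤ G.maxDegree := by
  refine csSup_le' ?_
  rintro _ ⟨x, rfl⟩
  refine le_trans (Nat.card_le_card_of_injective
    (fun e => (⟨e.1.1, mem_inc_deleteVerts_iff.1 e.2⟩ : {e : G.E // x.1 ∈ G.inc e})) ?_)
    (degree_le_maxDegree x.1)
  intro e f h
  exact Subtype.ext (Subtype.ext (Subtype.mk.inj h))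

lemma EdgeColorable.mono {k l : ℕ} (hkl : k ≤ l) (h : G.EdgeColorable k) :
    G.EdgeColorable l := by
  obtain ⟨c, hc⟩ := h
  exact ⟨fun e => Fin.castLE hkl (c e),
    fun e f hne hsh h => hc e f hne hsh (Fin.castLE_injective hkl h)⟩

lemma edgeColorable_of_chromaticIndex_le {k : ℕ} (h : G.chromaticIndex ≤ k) :
    G.EdgeColorable k :=
  (Nat.sInf_mem (s := {k | G.EdgeColorable k})
    ⟨_, Finite.equivFin G.E, fun _ _ hne _ h => hne ((Finite.equivFin G.E).injective h)⟩).mono h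

lemma chromaticIndex_deleteVerts_univ : (G.deleteVerts Set.univ).chromaticIndex = 0 := by
  have : IsEmpty (G.deleteVerts Set.univ).E := ⟨fun e => e.2 _ (G.inc e.1).out_fst_mem trivial⟩
  exact Nat.eq_zero_of_le_zero (Nat.sInf_le ⟨isEmptyElim, fun e => isEmptyElim e⟩)

lemma classOne_deleteVerts_univ : (G.deleteVerts Set.univ).ClassOne := by
  have : IsEmpty (G.deleteVerts Set.univ).V := ⟨fun v => v.2 (Set.mem_univ _)⟩
  simp [ClassOne, chromaticIndex_deleteVerts_univ, maxDegree, Set.range_eq_empty]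

lemma rv'_le_rv (G : Mgraph) : G.rv' ≤ G.rv :=
  csInf_le_csInf (OrderBot.bddBelow _) ⟨_, Set.univ, rfl, classOne_deleteVerts_univ⟩
    fun _ ⟨S, hS, hclass⟩ => ⟨S, hS, hclass.le.trans (maxDegree_deleteVerts_le S)⟩

lemma resistance_le_rv'_mul (hG : G.Loopless) : G.resistance ≤ G.rv' * (G.maxDegree / 2) := by
  obtain ⟨S, hS, hχ⟩ := Nat.sInf_mem (s := {k | ∃ S : Set G.V, Nat.card S = k ∧
    (G.deleteVerts S).chromaticIndex ≤ G.maxDegree})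
    ⟨_, Set.univ, rfl, chromaticIndex_deleteVerts_univ.trans_le (Nat.zero_le _)⟩
  rw [rv', ← hS, Nat.card_coe_set_eq]
  exact resistanceTo_le_ncard_mul_of_edgeColorable_deleteVerts hG degree_le_maxDegree
    (edgeColorable_of_chromaticIndex_le hχ)

end Mgraph

open Mgraph in
/-- For every finite loopless multigraph `G`:
`r(G) ≤ r_v(G)·⌊Δ(G)/2⌋` and `r(G) ≤ r'_v(G)·⌊Δ(G)/2⌋`. -/
theorem resistance_le_rv_mul_halfMaxDegree (G : Mgraph) (hG : G.Loopless) :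
    G.resistance ≤ G.rv * (G.maxDegree / 2) ∧
    G.resistance ≤ G.rv' * (G.maxDegree / 2) :=
  ⟨(resistance_le_rv'_mul hG).trans (Nat.mul_le_mul_right _ G.rv'_le_rv),
    resistance_le_rv'_mul hG⟩
end
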